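/- Suppose the solution set S of minimizing H(x) = Σ_{i=1}^3 D(x;Θ_i) over ℝ² contains a point x* lying outside all three balls Θ_1, Θ_2, Θ_3. Then S = {x*}, i.e., the minimizer is unique. -/

import Mathlib

/-!
Near a minimizer `x*` lying outside every ball, `H` coincides with `∑ ‖x - bᵢ‖ - ∑ sᵢ`. Since `H`
is convex, a second minimizer would yield a point `q ≠ x*` close to `x*` with `H q = H x*`, and
then the midpoint of `x*` and `q` must satisfy equality in the triangle inequality for every
`‖· - bᵢ‖`. In a strictly convex space this forces `‖x* - bᵢ‖ - ‖q - bᵢ‖ = ±‖x* - q‖` for each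
`i`, and an odd number of such terms cannot sum to `0`.
-/

open Metric Set Filter Topology

theorem Finset.sum_ne_zero_of_abs_eq_of_odd_card {ι : Type*} {s : Finset ι} (hs : Odd s.card)
    {a : ι → ℝ} {d : ℝ} (hd : d ≠ 0) (ha : ∀ i ∈ s, |a i| = d) : ∑ i ∈ s, a i ≠ 0 := by
  classical
  have hsplit : ∀ i ∈ s, a i = d - if a i < 0 then 2 * d else 0 := by
    intro i hi
    have := ha i hi
    split_ifs with hneg
    · rw [abs_of_neg hneg] at this; linarith
    · rw [abs_of_nonneg (not_lt.1 hneg)] at this; linarith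
  rw [Finset.sum_congr rfl hsplit, Finset.sum_sub_distrib, ← Finset.sum_filter,
    Finset.sum_const, Finset.sum_const, nsmul_eq_mul, nsmul_eq_mul]
  intro h
  have hcard : (s.card : ℝ) = 2 * (s.filter fun i => a i < 0).card := by
    apply mul_right_cancel₀ hd; linarith
  norm_cast at hcard
  exact Nat.not_even_iff_odd.2 hs ⟨_, hcard.trans (two_mul _)⟩

theorem ConvexOn.finset_sum {𝕜 E β ι : Type*} [Semiring 𝕜] [PartialOrder 𝕜] [AddCommMonoid E]
    [AddCommMonoid β] [PartialOrder β] [IsOrderedAddMonoid β] [SMul 𝕜 E] [Module 𝕜 β]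
    {s : Set E} (hs : Convex 𝕜 s) {t : Finset ι} {f : ι → E → β}
    (hf : ∀ i ∈ t, ConvexOn 𝕜 s (f i)) : ConvexOn 𝕜 s fun x => ∑ i ∈ t, f i x := by
  simpa only [Finset.sum_fn] using
    Finset.sum_induction f (ConvexOn 𝕜 s) (fun _ _ => ConvexOn.add) (convexOn_const 0 hs) hf

section NormedSpace

variable {E : Type*} [NormedAddCommGroup E] [NormedSpace ℝ E]

theorem infDist_closedBall (x c : E) {r : ℝ} (hr : 0 ≤ r) :
    infDist x (closedBall c r) = max (dist x c - r) 0 := by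
  rcases le_or_gt (dist x c) r with hin | hout
  · rw [infDist_zero_of_mem (mem_closedBall.2 hin), max_eq_right (sub_nonpos.2 hin)]
  have hxc : 0 < dist x c := hr.trans_lt hout
  rw [max_eq_left (sub_nonneg.2 hout.le)]
  refine le_antisymm ?_ ((le_infDist ⟨c, mem_closedBall_self hr⟩).2 fun y hy => ?_)
  · set t := r / dist x c
    have ht : t ≤ 1 := div_le_one_of_le₀ hout.le hxc.le
    have hmem : AffineMap.lineMap c x t ∈ closedBall c r := by
      rw [mem_closedBall, dist_lineMap_left, Real.norm_of_nonneg (by positivity), dist_comm,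
        div_mul_cancel₀ _ hxc.ne']
    calc infDist x (closedBall c r) ≤ dist x (AffineMap.lineMap c x t) :=
          infDist_le_dist_of_mem hmem
      _ = dist x c - r := by
        rw [dist_comm, dist_lineMap_right, Real.norm_of_nonneg (sub_nonneg.2 ht), dist_comm,
          sub_mul, div_mul_cancel₀ _ hxc.ne', one_mul]
  · linarith [dist_triangle x y c, mem_closedBall.1 hy]

theorem infDist_closedBall_of_notMem {x c : E} {r : ℝ} (hr : 0 ≤ r) (hx : x ∉ closedBall c r) :
    infDist x (closedBall c r) = dist x c - r := by
  rw [infDist_closedBall x c hr, max_eq_left]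
  simpa using (not_le.1 (mt mem_closedBall.2 hx)).le

theorem convexOn_infDist_closedBall (c : E) {r : ℝ} (hr : 0 ≤ r) :
    ConvexOn ℝ univ fun x => infDist x (closedBall c r) := by
  simp only [infDist_closedBall _ c hr]
  exact ((convexOn_dist c convex_univ).add_const (-r)).sup (convexOn_const 0 convex_univ)

theorem exists_ne_mem_segment_mem_ball {x y : E} (hxy : x ≠ y) {r : ℝ} (hr : 0 < r) :
    ∃ z ∈ segment ℝ x y, z ≠ x ∧ z ∈ ball x r := by
  have hnear : ∀ᶠ t in 𝓝[>] (0 : ℝ), AffineMap.lineMap x y t ∈ ball x r :=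
    nhdsWithin_le_nhds <| (AffineMap.lineMap_continuous.tendsto' 0 x
      (AffineMap.lineMap_apply_zero x y)).eventually (ball_mem_nhds x hr)
  obtain ⟨t, ⟨ht₀, ht₁⟩, hball⟩ := (Filter.Eventually.and (Ioo_mem_nhdsGT one_pos) hnear).exists
  exact ⟨_, lineMap_mem_segment ℝ x y ⟨ht₀.le, ht₁.le⟩,
    fun h => (AffineMap.lineMap_eq_left_iff.1 h).elim hxy ht₀.ne', hball⟩

variable [StrictConvexSpace ℝ E]

theorem abs_dist_sub_dist_eq_of_dist_midpoint_eq {p q b : E}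
    (h : dist (midpoint ℝ p q) b = (dist p b + dist q b) / 2) :
    |dist p b - dist q b| = dist p q := by
  have hmid : midpoint ℝ p q - b = (1 / 2 : ℝ) • ((p - b) + (q - b)) := by
    rw [midpoint_eq_smul_add, invOf_eq_inv]; module
  have hray : SameRay ℝ (p - b) (q - b) := by
    rw [sameRay_iff_norm_add]
    rw [dist_eq_norm, hmid, norm_smul, dist_eq_norm, dist_eq_norm] at h
    norm_num at h
    linarith
  rw [dist_eq_norm, dist_eq_norm, dist_eq_norm, ← hray.norm_sub, sub_sub_sub_cancel_right]

theorem sum_dist_midpoint_lt_of_odd_card {ι : Type*} {s : Finset ι} (hs : Odd s.card)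
    (b : ι → E) {p q : E} (hpq : p ≠ q)
    (h : ∑ i ∈ s, dist p (b i) = ∑ i ∈ s, dist q (b i)) :
    ∑ i ∈ s, dist (midpoint ℝ p q) (b i) < ∑ i ∈ s, dist p (b i) := by
  have hle : ∀ i ∈ s, dist (midpoint ℝ p q) (b i) ≤ (dist p (b i) + dist q (b i)) / 2 :=
    fun i _ => by simpa only [midpoint_self] using dist_midpoint_midpoint_le p q (b i) (b i)
  have havg : ∑ i ∈ s, (dist p (b i) + dist q (b i)) / 2 = ∑ i ∈ s, dist p (b i) := by
    rw [← Finset.sum_div, Finset.sum_add_distrib, ← h, add_self_div_two]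
  refine havg ▸ (Finset.sum_le_sum hle).lt_of_ne fun heq => ?_
  have habs : ∀ i ∈ s, |dist p (b i) - dist q (b i)| = dist p q := fun i hi =>
    abs_dist_sub_dist_eq_of_dist_midpoint_eq ((Finset.sum_eq_sum_iff_of_le hle).1 heq i hi)
  exact Finset.sum_ne_zero_of_abs_eq_of_odd_card hs (dist_ne_zero.2 hpq) habs
    (by rw [Finset.sum_sub_distrib, h, sub_self])

end NormedSpace

theorem fermat_torricelli_unique_of_outside_general
    (b : Fin 3 → EuclideanSpace ℝ (Fin 2)) (s : Fin 3 → ℝ) (hs : ∀ i, 0 ≤ s i)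
    (H : EuclideanSpace ℝ (Fin 2) → ℝ)
    (hH : ∀ x, H x = ∑ i : Fin 3, Metric.infDist x (Metric.closedBall (b i) (s i)))
    (xs : EuclideanSpace ℝ (Fin 2)) (hmin : ∀ x, H xs ≤ H x)
    (hout : ∀ i, xs ∉ Metric.closedBall (b i) (s i)) :
    {x | ∀ y, H x ≤ H y} = {xs} := by
  have hconv : ConvexOn ℝ univ H := by
    rw [show H = _ from funext hH]
    exact ConvexOn.finset_sum convex_univ fun i _ => convexOn_infDist_closedBall (b i) (hs i)
  obtain ⟨r, hr, hball⟩ := eventually_nhds_iff_ball.1 <| eventually_all.2 fun i =>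
    isClosed_closedBall.isOpen_compl.mem_nhds (hout i)
  have hlocal : ∀ y ∈ ball xs r, H y = ∑ i, dist y (b i) - ∑ i, s i := fun y hy => by
    rw [hH, ← Finset.sum_sub_distrib]
    exact Finset.sum_congr rfl fun i _ => infDist_closedBall_of_notMem (hs i) (hball y hy i)
  refine eq_singleton_iff_unique_mem.2 ⟨hmin, fun x hx => ?_⟩
  by_contra hne
  obtain ⟨q, hq_seg, hqxs, hq_ball⟩ := exists_ne_mem_segment_mem_ball (Ne.symm hne) hr
  have hq : H q ≤ H xs := by
    have : Convex ℝ {y | H y ≤ H xs} := by simpa using hconv.convex_le (H xs)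
    exact this.segment_subset (le_refl (H xs)) (hx xs) hq_seg
  have hm_ball : midpoint ℝ xs q ∈ ball xs r :=
    (convex_ball xs r).midpoint_mem (mem_ball_self hr) hq_ball
  have hxs_ball : xs ∈ ball xs r := mem_ball_self hr
  have hF : ∑ i, dist xs (b i) = ∑ i, dist q (b i) := by
    linarith [hlocal q hq_ball, hlocal xs hxs_ball, hmin q]
  have hmid := sum_dist_midpoint_lt_of_odd_card (by decide) b (Ne.symm hqxs) hF
  linarith [hlocal _ hm_ball, hlocal xs hxs_ball, hmin (midpoint ℝ xs q)]

/-- If the solution set of the generalized Fermat–Torricelli problem contains a point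
lying outside all three balls, then that point is the unique minimizer. -/
theorem fermat_torricelli_unique_of_outside
    (b : Fin 3 → EuclideanSpace ℝ (Fin 2)) (s : Fin 3 → ℝ) (hs : ∀ i, 0 ≤ s i)
    (hb : Function.Injective b)
    (H : EuclideanSpace ℝ (Fin 2) → ℝ)
    (hH : ∀ x, H x = ∑ i : Fin 3, Metric.infDist x (Metric.closedBall (b i) (s i)))
    (xs : EuclideanSpace ℝ (Fin 2)) (hmin : ∀ x, H xs ≤ H x)
    (hout : ∀ i, xs ∉ Metric.closedBall (b i) (s i)) :
    {x | ∀ y, H x ≤ H y} = {xs} :=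
  fermat_torricelli_unique_of_outside_general b s hs H hH xs hmin hout
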